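/- arXiv:1608.08204 — 3 statements merged into one kernel-verified Lean document; each statement's English description precedes it below -/
import Mathlib

section
/- Let φ ∈ 𝒜 (with d = 1, γ_1 = 2). Let g : (0,1) → ℝ be Lebesgue integrable, let c ∈ ℝ, and define u(x) = c + ∫₀ˣ g(t) dt for x ∈ (0,1) (so u belongs to W^{1,1}(0,1) with weak derivative g). Then liminf_{δ→0⁺} Λ_δ(u, φ, (0,1)) ≥ ∫₀¹ |g(t)| dt. -/
open MeasureTheory Filter Set Topology
open scoped ENNReal NNReal

/-- The one-dimensional nonlocal functional `Λ_δ(u, φ, Ω)`. -/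
noncomputable def Lam1 (δ : ℝ) (φ : ℝ → ℝ) (u : ℝ → ℝ) (Ω : Set ℝ) : ℝ≥0∞ :=
  ENNReal.ofReal δ *
    ∫⁻ p in Ω ×ˢ Ω, ENNReal.ofReal (φ (|u p.1 - u p.2| / δ) / |p.1 - p.2| ^ 2)

/-- The class `𝒜` of admissible functions `φ` in dimension one (`γ_1 = 2`). -/
structure MemA1 (φ : ℝ → ℝ) : Prop where
  nonneg : ∀ t, 0 ≤ t → 0 ≤ φ t
  mono : MonotoneOn φ (Ici (0 : ℝ))
  lsc : LowerSemicontinuousOn φ (Ici (0 : ℝ))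
  map_zero : φ 0 = 0
  quad : ∃ a > (0 : ℝ), ∀ t ∈ Icc (0 : ℝ) 1, φ t ≤ a * t ^ 2
  bdd : ∃ b > (0 : ℝ), ∀ t, 0 ≤ t → φ t ≤ b
  normalized : 2 * ∫ t in Ioi (0 : ℝ), φ t / t ^ 2 = 1


lemma aux_liminf_ge_of_seq {α : Type*} {f : α → ℝ≥0∞} {l : Filter α}
    [l.IsCountablyGenerated] [l.NeBot] {A : ℝ≥0∞}
    (h : ∀ x : ℕ → α, Tendsto x atTop l → A ≤ liminf (fun n => f (x n)) atTop) :
    A ≤ liminf f l := by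
  by_contra hc
  push_neg at hc
  obtain ⟨b, hb1, hb2⟩ := exists_between hc
  have hfreq : ∃ᶠ y in l, f y < b := by
    by_contra hev
    simp only [not_frequently, not_lt] at hev
    exact absurd (le_liminf_of_le (by isBoundedDefault) hev) (not_le.mpr hb1)
  obtain ⟨x, hxl, hx⟩ := exists_seq_forall_of_frequently hfreq
  have : liminf (fun n => f (x n)) atTop ≤ b :=
    liminf_le_of_frequently_le (Frequently.of_forall fun n => (hx n).le)
  exact absurd ((h x hxl).trans this) (not_le.mpr hb2)

lemma aux_scale (F : ℝ → ℝ≥0∞) (hF : Measurable F) {c : ℝ} (T : ℝ) (hc : 0 < c) :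
    ∫⁻ s in Ioo 0 T, F (c * s) = ENNReal.ofReal c⁻¹ * ∫⁻ h in Ioo 0 (c * T), F h := by
  have hpre : (fun s : ℝ => c * s) ⁻¹' (Ioo 0 (c * T)) = Ioo 0 T := by
    ext s
    simp only [Set.mem_preimage, Set.mem_Ioo, mul_lt_mul_iff_right₀ hc]
    constructor
    · rintro ⟨h1, h2⟩; refine ⟨?_, h2⟩
      by_contra hs
      push_neg at hs
      nlinarith
    · rintro ⟨h1, h2⟩; exact ⟨mul_pos hc h1, h2⟩
  calc ∫⁻ s in Ioo 0 T, F (c * s)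
      = ∫⁻ y, F y ∂(Measure.map (fun s : ℝ => c * s) (volume.restrict ((fun s : ℝ => c * s) ⁻¹' (Ioo 0 (c * T))))) := by
        rw [lintegral_map hF (measurable_const_mul c), hpre]
    _ = ∫⁻ y, F y ∂((Measure.map (fun s : ℝ => c * s) volume).restrict (Ioo 0 (c * T))) := by
        rw [Measure.restrict_map (measurable_const_mul c) measurableSet_Ioo]
    _ = ENNReal.ofReal c⁻¹ * ∫⁻ h in Ioo 0 (c * T), F h := by
        rw [Real.map_volume_mul_left hc.ne', Measure.restrict_smul, lintegral_smul_measure,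
          abs_of_pos (inv_pos.mpr hc), smul_eq_mul]

lemma aux_translate (F : ℝ → ℝ≥0∞) (hF : Measurable F) (x a b : ℝ) :
    ∫⁻ y in Ioo (a + x) (b + x), F (y - x) = ∫⁻ h in Ioo a b, F h := by
  have hmp : MeasurePreserving (fun h : ℝ => h + x) volume volume :=
    measurePreserving_add_right volume x
  have := hmp.setLIntegral_comp_preimage (s := Ioo (a + x) (b + x))
    measurableSet_Ioo (f := fun y => F (y - x)) (hF.comp (measurable_sub_const x))
  have hpre : (fun h : ℝ => h + x) ⁻¹' (Ioo (a + x) (b + x)) = Ioo a b := by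
    ext h; simp [Set.mem_Ioo]
  rw [hpre] at this
  rw [← this]
  exact lintegral_congr fun h => by simp

lemma aux_neg (F : ℝ → ℝ≥0∞) (hF : Measurable F) (r : ℝ) :
    ∫⁻ h in Ioo (-r) 0, F h = ∫⁻ h in Ioo 0 r, F (-h) := by
  have hmp : MeasurePreserving (fun h : ℝ => -h) volume volume :=
    Measure.measurePreserving_neg volume
  have := hmp.setLIntegral_comp_preimage (s := Ioo (-r) 0) measurableSet_Ioo hF
  have hpre : (fun h : ℝ => -h) ⁻¹' (Ioo (-r) 0) = Ioo 0 r := by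
    ext h; simp [Set.mem_Ioo, and_comm]
  rw [hpre] at this
  exact this.symm

lemma aux_sup (f₀ : ℝ → ℝ≥0∞) (hf : Measurable f₀) :
    ⨆ m : ℕ, ∫⁻ t in Ioo 0 (m : ℝ), f₀ t = ∫⁻ t in Ioi (0:ℝ), f₀ t := by
  have h1 : ∀ m : ℕ, ∫⁻ t in Ioo 0 (m : ℝ), f₀ t = ∫⁻ t, (Ioo 0 (m:ℝ)).indicator f₀ t :=
    fun m => (lintegral_indicator measurableSet_Ioo f₀).symm
  have h2 : ∫⁻ t in Ioi (0:ℝ), f₀ t = ∫⁻ t, (Ioi (0:ℝ)).indicator f₀ t :=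
    (lintegral_indicator measurableSet_Ioi f₀).symm
  simp only [h1, h2]
  rw [← lintegral_iSup]
  · congr 1
    ext t
    apply le_antisymm
    · exact iSup_le fun m => indicator_le_indicator_of_subset Ioo_subset_Ioi_self (fun _ => zero_le) t
    · by_cases ht : t ∈ Ioi (0:ℝ)
      · obtain ⟨m, hm⟩ := exists_nat_gt t
        rw [indicator_of_mem ht]
        calc f₀ t = (Ioo 0 (m:ℝ)).indicator f₀ t := by rw [indicator_of_mem (mem_Ioo.mpr ⟨mem_Ioi.mp ht, hm⟩)]
          _ ≤ ⨆ m : ℕ, (Ioo 0 (m:ℝ)).indicator f₀ t := le_iSup (fun k : ℕ => (Ioo 0 (k:ℝ)).indicator f₀ t) m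
      · rw [indicator_of_notMem ht]; exact zero_le
  · exact fun m => hf.indicator measurableSet_Ioo
  · intro i j hij t
    exact indicator_le_indicator_of_subset (Ioo_subset_Ioo le_rfl (Nat.cast_le.mpr hij)) (fun _ => zero_le) t

lemma aux_point (G : ℝ → ℝ) (hG : Integrable G (volume : Measure ℝ)) (x : ℝ) {ε : ℝ} (hε : 0 < ε)
    {R : ℝ} (hR : 0 < R)
    (havg : Tendsto (fun r => ⨍ y in Metric.closedBall x r, ‖G y - G x‖) (𝓝[>] 0) (𝓝 0)) :
    ∃ r0, 0 < r0 ∧ r0 ≤ R ∧ ∀ y : ℝ, |y - x| ≤ r0 →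
      |(∫ t in x..y, G t) - G x * (y - x)| ≤ ε * |y - x| := by
  have hev : ∀ᶠ r in 𝓝[>] (0:ℝ), ⨍ y in Metric.closedBall x r, ‖G y - G x‖ < ε / 2 :=
    havg.eventually_lt_const (by positivity)
  obtain ⟨u, hu, huP⟩ := mem_nhdsGT_iff_exists_Ioo_subset.mp hev
  rw [mem_Ioi] at hu
  refine ⟨min (u / 2) R, lt_min (by linarith) hR, min_le_right _ _, fun y hy => ?_⟩
  rcases eq_or_ne y x with rfl | hyx
  · simp
  · set h := |y - x| with hh
    have hpos : 0 < h := abs_pos.mpr (sub_ne_zero.mpr hyx)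
    have hhu : h ∈ Ioo (0:ℝ) u := ⟨hpos, lt_of_le_of_lt (hy.trans (min_le_left _ _)) (by linarith)⟩
    have havg2 : ⨍ t in Metric.closedBall x h, ‖G t - G x‖ < ε / 2 := huP hhu
    -- rewrite the difference as an integral
    have h1 : (∫ t in x..y, G t) - G x * (y - x) = ∫ t in x..y, (G t - G x) := by
      rw [intervalIntegral.integral_sub hG.intervalIntegrable intervalIntegrable_const,
        intervalIntegral.integral_const, smul_eq_mul, mul_comm]
    rw [h1]
    have h2 : |∫ t in x..y, (G t - G x)| ≤ ∫ t in uIoc x y, |G t - G x| := by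
      simpa [Real.norm_eq_abs] using
        intervalIntegral.norm_integral_le_integral_norm_uIoc (f := fun t => G t - G x)
          (a := x) (b := y) (μ := volume)
    have hint : IntegrableOn (fun t => |G t - G x|) (Metric.closedBall x h) volume :=
      by
      have : IntegrableOn (fun t => G t - G x) (Metric.closedBall x h) volume :=
        hG.integrableOn.sub (integrableOn_const measure_closedBall_lt_top.ne)
      simpa [Real.norm_eq_abs, IntegrableOn] using this.norm
    have hsub : uIoc x y ⊆ Metric.closedBall x h := by
      intro t ht
      rw [Real.closedBall_eq_Icc]
      rcases le_total x y with hxy | hxy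
      · rw [uIoc_of_le hxy] at ht
        have : h = y - x := by rw [hh, abs_of_nonneg (by linarith)]
        exact ⟨by linarith [ht.1, ht.2], by linarith [ht.1, ht.2]⟩
      · rw [uIoc_of_ge hxy] at ht
        have : h = x - y := by rw [hh, abs_of_nonpos (by linarith)]; ring
        exact ⟨by linarith [ht.1, ht.2], by linarith [ht.1, ht.2]⟩
    have h3 : ∫ t in uIoc x y, |G t - G x| ≤ ∫ t in Metric.closedBall x h, |G t - G x| := by
      apply setIntegral_mono_set hint
      · filter_upwards with t using abs_nonneg _
      · exact HasSubset.Subset.eventuallyLE hsub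
    have hvol : (volume (Metric.closedBall x h)).toReal = 2 * h := by
      rw [Real.volume_closedBall, ENNReal.toReal_ofReal (by linarith)]
    have h4 : ∫ t in Metric.closedBall x h, |G t - G x| ≤ 2 * h * (ε / 2) := by
      have := setAverage_eq (fun t => ‖G t - G x‖) (Metric.closedBall x h) (μ := volume)
      have hvne : (volume (Metric.closedBall x h)).toReal ≠ 0 := by rw [hvol]; positivity
      have : ∫ t in Metric.closedBall x h, |G t - G x|
          = (volume (Metric.closedBall x h)).toReal * ⨍ t in Metric.closedBall x h, ‖G t - G x‖ := by
        rw [setAverage_eq, smul_eq_mul, ← mul_assoc, measureReal_def, mul_inv_cancel₀ hvne, one_mul]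
        simp [Real.norm_eq_abs]
      rw [this, hvol]
      have h2h : (0:ℝ) ≤ 2 * h := by linarith
      nlinarith [havg2.le]
    calc |∫ t in x..y, (G t - G x)| ≤ ∫ t in uIoc x y, |G t - G x| := h2
      _ ≤ ∫ t in Metric.closedBall x h, |G t - G x| := h3
      _ ≤ 2 * h * (ε / 2) := h4
      _ = ε * h := by ring

/-- For `u ∈ W^{1,1}(0,1)`, `u(x) = c + ∫₀ˣ g`, one has
`liminf_{δ→0⁺} Λ_δ(u, φ, (0,1)) ≥ ∫₀¹ |g|`. -/
theorem stmt2 (φ : ℝ → ℝ) (hφ : MemA1 φ) (g : ℝ → ℝ)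
    (hg : IntegrableOn g (Set.Ioo 0 1)) (c : ℝ) :
    ENNReal.ofReal (∫ t in Set.Ioo (0 : ℝ) 1, |g t|) ≤
      Filter.liminf
        (fun δ => Lam1 δ φ (fun x => c + ∫ t in (0 : ℝ)..x, g t) (Set.Ioo 0 1))
        (𝓝[>] (0 : ℝ)) := by
  classical
  -- the monotone measurable extension ψ of φ
  set ψ : ℝ → ℝ := fun t => φ (max t 0) with hψdef
  have hψmono : Monotone ψ := fun s t hst =>
    hφ.mono (mem_Ici.mpr (le_max_right s 0)) (mem_Ici.mpr (le_max_right t 0))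
      (max_le_max hst le_rfl)
  have hψmeas : Measurable ψ := hψmono.measurable
  have hψeq : ∀ t : ℝ, 0 ≤ t → ψ t = φ t := fun t ht => by
    simp only [hψdef]; rw [max_eq_left ht]
  -- normalization
  have hint : IntegrableOn (fun t => φ t / t ^ 2) (Ioi (0 : ℝ)) volume := by
    by_contra h
    have hnorm := hφ.normalized
    rw [integral_undef h] at hnorm
    norm_num at hnorm
  have hval : ∫ t in Ioi (0 : ℝ), φ t / t ^ 2 = 1 / 2 := by linarith [hφ.normalized]
  set f₀ : ℝ → ℝ≥0∞ := fun t => ENNReal.ofReal (ψ t / t ^ 2) with hf₀def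
  have hf₀meas : Measurable f₀ :=
    ENNReal.measurable_ofReal.comp (hψmeas.div (measurable_id.pow_const 2))
  have hK : ∫⁻ t in Ioi (0 : ℝ), f₀ t = ENNReal.ofReal (1 / 2) := by
    have h1 : ∫⁻ t in Ioi (0 : ℝ), f₀ t = ∫⁻ t in Ioi (0 : ℝ), ENNReal.ofReal (φ t / t ^ 2) := by
      apply setLIntegral_congr_fun measurableSet_Ioi
      intro t ht
      simp only [hf₀def]
      rw [hψeq t (le_of_lt ht)]
    rw [h1, ← ofReal_integral_eq_lintegral_ofReal hint ?_, hval]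
    filter_upwards [self_mem_ae_restrict measurableSet_Ioi] with t ht
    have h2 := hφ.nonneg t (le_of_lt ht)
    positivity
  have hsup : ⨆ m : ℕ, ∫⁻ t in Ioo 0 (m : ℝ), f₀ t = ENNReal.ofReal (1 / 2) := by
    rw [aux_sup f₀ hf₀meas, hK]
  -- the globally integrable representative
  set G : ℝ → ℝ := (Ioo (0 : ℝ) 1).indicator g with hGdef
  have hGint : Integrable G volume := (integrable_indicator_iff measurableSet_Ioo).mpr hg
  set v : ℝ → ℝ := fun x => c + ∫ t in (0 : ℝ)..x, G t with hvdef
  have hvcont : Continuous v := continuous_const.add (hGint.continuous_primitive 0)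
  have huv : ∀ x ∈ Ioo (0 : ℝ) 1, (c + ∫ t in (0 : ℝ)..x, g t) = v x := by
    intro x hx
    have he : ∫ t in (0 : ℝ)..x, g t = ∫ t in (0 : ℝ)..x, G t := by
      apply intervalIntegral.integral_congr_ae
      filter_upwards with t ht
      rw [uIoc_of_le hx.1.le] at ht
      rw [hGdef, indicator_of_mem (mem_Ioo.mpr ⟨ht.1, lt_of_le_of_lt ht.2 hx.2⟩)]
    simp only [hvdef]
    rw [he]
  have hvsub : ∀ x y : ℝ, v y - v x = ∫ t in x..y, G t := by
    intro x y
    simp only [hvdef]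
    rw [add_sub_add_left_eq_sub]
    exact intervalIntegral.integral_interval_sub_left hGint.intervalIntegrable
      hGint.intervalIntegrable
  -- measurability
  have hW : ∀ δ : ℝ, Measurable (fun p : ℝ × ℝ =>
      ENNReal.ofReal (ψ (|v p.1 - v p.2| / δ) / |p.1 - p.2| ^ 2)) := by
    intro δ
    apply ENNReal.measurable_ofReal.comp
    apply Measurable.div
    · exact hψmeas.comp
        (((hvcont.comp continuous_fst).sub (hvcont.comp continuous_snd)).abs.div_const δ).measurable
    · exact ((continuous_fst.sub continuous_snd).abs.pow 2).measurable
  set F : ℝ → ℝ → ℝ≥0∞ := fun δ x => ENNReal.ofReal δ *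
      ∫⁻ y in Ioo (0 : ℝ) 1, ENNReal.ofReal (ψ (|v x - v y| / δ) / |x - y| ^ 2) with hFdef
  have hFmeas : ∀ δ : ℝ, Measurable (F δ) := by
    intro δ
    apply Measurable.const_mul
    exact (hW δ).lintegral_prod_right'
  -- identification of the functional
  have hLam : ∀ δ : ℝ, 0 < δ →
      Lam1 δ φ (fun x => c + ∫ t in (0 : ℝ)..x, g t) (Set.Ioo 0 1)
        = ∫⁻ x in Ioo (0 : ℝ) 1, F δ x := by
    intro δ hδ
    rw [Lam1]
    have hcongr : ∫⁻ p in (Ioo (0 : ℝ) 1) ×ˢ (Ioo (0 : ℝ) 1),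
        ENNReal.ofReal (φ (|(c + ∫ t in (0 : ℝ)..p.1, g t) - (c + ∫ t in (0 : ℝ)..p.2, g t)| / δ)
          / |p.1 - p.2| ^ 2)
        = ∫⁻ p in (Ioo (0 : ℝ) 1) ×ˢ (Ioo (0 : ℝ) 1),
        ENNReal.ofReal (ψ (|v p.1 - v p.2| / δ) / |p.1 - p.2| ^ 2) := by
      apply setLIntegral_congr_fun (measurableSet_Ioo.prod measurableSet_Ioo)
      intro p hp
      dsimp only; rw [huv p.1 hp.1, huv p.2 hp.2, hψeq _ (by positivity)]
    rw [hcongr, Measure.volume_eq_prod, ← Measure.prod_restrict,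
      lintegral_prod _ (hW δ).aemeasurable, hFdef,
      ← lintegral_const_mul _ ((hW δ).lintegral_prod_right')]
  -- Lebesgue points
  have hbes' : ∀ᵐ x ∂(volume : Measure ℝ),
      Tendsto (fun r => ⨍ y in Metric.closedBall x r, ‖G y - G x‖) (𝓝[>] 0) (𝓝 0) := by
    filter_upwards [(Besicovitch.vitaliFamily (volume : Measure ℝ)).ae_tendsto_average_norm_sub
      hGint.locallyIntegrable] with x hx
    exact hx.comp (Besicovitch.tendsto_filterAt volume x)
  -- pass to sequences
  apply aux_liminf_ge_of_seq
  intro δs hδs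
  have hδpos : ∀ᶠ n in atTop, 0 < δs n := eventually_mem_of_tendsto_nhdsWithin hδs
  have hδ0 : Tendsto δs atTop (𝓝 0) := hδs.mono_right nhdsWithin_le_nhds
  -- a.e. pointwise lower bound on the liminf
  have key : ∀ᵐ x ∂(volume.restrict (Ioo (0 : ℝ) 1)),
      ENNReal.ofReal |g x| ≤ liminf (fun n => F (δs n) x) atTop := by
    filter_upwards [ae_restrict_of_ae hbes', ae_restrict_mem measurableSet_Ioo] with x havg hmem
    have main : ∀ ε : ℝ, 0 < ε →
        ENNReal.ofReal (|g x| - ε) ≤ liminf (fun n => F (δs n) x) atTop := by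
      intro ε hε
      rcases le_or_gt (|g x|) ε with hle | hlt
      · rw [ENNReal.ofReal_of_nonpos (by linarith)]; exact zero_le
      set M : ℝ := |g x| - ε with hMdef
      have hM : 0 < M := by simp only [hMdef]; linarith
      have hR : 0 < min (x / 2) ((1 - x) / 2) := by
        rcases hmem with ⟨h1, h2⟩
        apply lt_min <;> linarith
      obtain ⟨r0, hr0pos, hr0le, hr0⟩ := aux_point G hGint x hε hR havg
      have hGx : G x = g x := indicator_of_mem hmem g
      have hr : ∀ y : ℝ, |y - x| ≤ r0 → M * |y - x| ≤ |v y - v x| := by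
        intro y hy
        have h1 := hr0 y hy
        rw [hGx] at h1
        rw [hvsub x y]
        have h2 := abs_sub_abs_le_abs_sub (g x * (y - x)) (∫ t in x..y, G t)
        have h3 : |g x * (y - x) - ∫ t in x..y, G t| = |(∫ t in x..y, G t) - g x * (y - x)| :=
          abs_sub_comm _ _
        rw [abs_mul] at h2
        calc M * |y - x| = |g x| * |y - x| - ε * |y - x| := by rw [hMdef]; ring
          _ ≤ |∫ t in x..y, G t| := by linarith
      have hsub1 : Ioo (x - r0) (x + r0) ⊆ Ioo (0 : ℝ) 1 := by
        intro y hy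
        rcases hmem with ⟨h1, h2⟩
        have ha := le_trans hr0le (min_le_left (x / 2) ((1 - x) / 2))
        have hb := le_trans hr0le (min_le_right (x / 2) ((1 - x) / 2))
        exact ⟨by rcases hy with ⟨hy1, _⟩; linarith, by rcases hy with ⟨_, hy2⟩; linarith⟩
      -- the per-δ lower bound
      have hlow : ∀ δ : ℝ, 0 < δ →
          2 * ENNReal.ofReal M * ∫⁻ s in Ioo 0 (M * r0 / δ), f₀ s ≤ F δ x := by
        intro δ hδ
        set f' : ℝ → ℝ≥0∞ := fun h => ENNReal.ofReal (ψ (M * |h| / δ) / h ^ 2) with hf'def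
        have hf' : Measurable f' := by
          apply ENNReal.measurable_ofReal.comp
          apply Measurable.div
          · exact hψmeas.comp ((continuous_abs.measurable.const_mul M).div_const δ)
          · exact measurable_id.pow_const 2
        have step2 : ∫⁻ y in Ioo (x - r0) (x + r0), f' (y - x)
            ≤ ∫⁻ y in Ioo (x - r0) (x + r0),
              ENNReal.ofReal (ψ (|v x - v y| / δ) / |x - y| ^ 2) := by
          apply lintegral_mono_ae
          filter_upwards [ae_restrict_mem measurableSet_Ioo] with y hy
          apply ENNReal.ofReal_le_ofReal
          have hyr : |y - x| ≤ r0 := by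
            rw [abs_le]
            exact ⟨by linarith [hy.1], by linarith [hy.2]⟩
          have hnum : ψ (M * |y - x| / δ) ≤ ψ (|v x - v y| / δ) := by
            apply hψmono
            have h5 := hr y hyr
            rw [abs_sub_comm (v x) (v y), div_eq_mul_inv, div_eq_mul_inv]
            exact mul_le_mul_of_nonneg_right h5 (by positivity)
          have hden : |x - y| ^ 2 = (y - x) ^ 2 := by
            rw [abs_sub_comm, sq_abs]
          rw [hden, div_eq_mul_inv, div_eq_mul_inv]
          exact mul_le_mul_of_nonneg_right hnum (by positivity)
        have e1 : ∫⁻ y in Ioo (x - r0) (x + r0), f' (y - x) = ∫⁻ h in Ioo (-r0) r0, f' h := by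
          rw [show x - r0 = -r0 + x by ring, show x + r0 = r0 + x by ring]
          exact aux_translate f' hf' x (-r0) r0
        have e2 : ∫⁻ h in Ioo (-r0) 0, f' h = ∫⁻ h in Ioo 0 r0, f' h := by
          rw [aux_neg f' hf' r0]
          apply setLIntegral_congr_fun measurableSet_Ioo
          intro h hh
          simp only [hf'def, abs_neg, neg_sq]
        have e3 : 2 * ∫⁻ h in Ioo 0 r0, f' h ≤ ∫⁻ h in Ioo (-r0) r0, f' h := by
          have hd : Disjoint (Ioo (-r0) 0) (Ioo (0 : ℝ) r0) := by
            rw [Set.disjoint_left]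
            rintro t ⟨_, h2⟩ ⟨h3, _⟩
            linarith
          have hun : ∫⁻ h in Ioo (-r0) 0 ∪ Ioo 0 r0, f' h
              = (∫⁻ h in Ioo (-r0) 0, f' h) + ∫⁻ h in Ioo 0 r0, f' h :=
            lintegral_union measurableSet_Ioo hd
          calc 2 * ∫⁻ h in Ioo 0 r0, f' h
              = (∫⁻ h in Ioo (-r0) 0, f' h) + ∫⁻ h in Ioo 0 r0, f' h := by rw [e2, two_mul]
            _ = ∫⁻ h in Ioo (-r0) 0 ∪ Ioo 0 r0, f' h := hun.symm
            _ ≤ ∫⁻ h in Ioo (-r0) r0, f' h := by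
                apply lintegral_mono_set
                rintro t (ht | ht)
                · exact ⟨ht.1, ht.2.trans hr0pos⟩
                · exact ⟨lt_trans (neg_lt_zero.mpr hr0pos) ht.1, ht.2⟩
        set T : ℝ := M * r0 / δ with hTdef
        have hcδ : (0 : ℝ) < δ / M := div_pos hδ hM
        have hcT : (δ / M) * T = r0 := by
          rw [hTdef]
          field_simp
        have e4 : ∫⁻ s in Ioo 0 T, f' ((δ / M) * s)
            = ENNReal.ofReal ((δ / M)⁻¹) * ∫⁻ h in Ioo 0 r0, f' h := by
          have h6 := aux_scale f' hf' T hcδ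
          rwa [hcT] at h6
        have e5 : ∫⁻ s in Ioo 0 T, f' ((δ / M) * s)
            = ENNReal.ofReal (((δ / M) ^ 2)⁻¹) * ∫⁻ s in Ioo 0 T, f₀ s := by
          rw [← lintegral_const_mul _ hf₀meas]
          apply setLIntegral_congr_fun measurableSet_Ioo
          intro s hs
          simp only [hf'def, hf₀def]
          have hs0 : 0 < s := hs.1
          have habs : |(δ / M) * s| = (δ / M) * s := abs_of_pos (mul_pos hcδ hs0)
          have harg : M * |(δ / M) * s| / δ = s := by
            rw [habs]
            field_simp
          rw [harg, ← ENNReal.ofReal_mul (by positivity)]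
          congr 1
          rw [mul_pow]
          ring
        have e6 : ∫⁻ h in Ioo 0 r0, f' h = ENNReal.ofReal (M / δ) * ∫⁻ s in Ioo 0 T, f₀ s := by
          have h1 : ENNReal.ofReal (δ / M) * ENNReal.ofReal ((δ / M)⁻¹) = 1 := by
            rw [← ENNReal.ofReal_mul hcδ.le, mul_inv_cancel₀ hcδ.ne', ENNReal.ofReal_one]
          calc ∫⁻ h in Ioo 0 r0, f' h
              = ENNReal.ofReal (δ / M) * (ENNReal.ofReal ((δ / M)⁻¹) * ∫⁻ h in Ioo 0 r0, f' h) := by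
                rw [← mul_assoc, h1, one_mul]
            _ = ENNReal.ofReal (δ / M)
                * (ENNReal.ofReal (((δ / M) ^ 2)⁻¹) * ∫⁻ s in Ioo 0 T, f₀ s) := by
                rw [← e4, e5]
            _ = ENNReal.ofReal (M / δ) * ∫⁻ s in Ioo 0 T, f₀ s := by
                rw [← mul_assoc, ← ENNReal.ofReal_mul hcδ.le]
                congr 2
                rw [pow_two, mul_inv, ← mul_assoc, mul_inv_cancel₀ hcδ.ne', one_mul,
                  inv_div]
        have hMδ : ENNReal.ofReal δ * ENNReal.ofReal (M / δ) = ENNReal.ofReal M := by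
          rw [← ENNReal.ofReal_mul hδ.le]
          congr 1
          field_simp
        calc 2 * ENNReal.ofReal M * ∫⁻ s in Ioo 0 T, f₀ s
            = ENNReal.ofReal δ * (2 * (ENNReal.ofReal (M / δ) * ∫⁻ s in Ioo 0 T, f₀ s)) := by
              rw [← hMδ]; ring
          _ = ENNReal.ofReal δ * (2 * ∫⁻ h in Ioo 0 r0, f' h) := by rw [e6]
          _ ≤ ENNReal.ofReal δ * ∫⁻ h in Ioo (-r0) r0, f' h := mul_le_mul_right e3 _
          _ = ENNReal.ofReal δ * ∫⁻ y in Ioo (x - r0) (x + r0), f' (y - x) := by rw [e1]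
          _ ≤ ENNReal.ofReal δ * ∫⁻ y in Ioo (x - r0) (x + r0),
                ENNReal.ofReal (ψ (|v x - v y| / δ) / |x - y| ^ 2) := mul_le_mul_right step2 _
          _ ≤ F δ x := mul_le_mul_right (lintegral_mono_set hsub1) _
      -- take the liminf
      have hm : ∀ m : ℕ, 2 * ENNReal.ofReal M * ∫⁻ s in Ioo 0 (m : ℝ), f₀ s
          ≤ liminf (fun n => F (δs n) x) atTop := by
        intro m
        apply le_liminf_of_le (by isBoundedDefault)
        have hsmall : ∀ᶠ n in atTop, δs n < M * r0 / (m + 1) :=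
          hδ0.eventually_lt_const (by positivity)
        filter_upwards [hδpos, hsmall] with n h1 h2
        have hmT : (m : ℝ) ≤ M * r0 / δs n := by
          have h3 : δs n * ((m : ℝ) + 1) < M * r0 := by
            have h4 := (lt_div_iff₀ (by positivity : (0 : ℝ) < (m : ℝ) + 1)).mp h2
            linarith [mul_pos h1 (by positivity : (0 : ℝ) < (m : ℝ) + 1)]
          rw [le_div_iff₀ h1]
          nlinarith [h1.le]
        calc 2 * ENNReal.ofReal M * ∫⁻ s in Ioo 0 (m : ℝ), f₀ s
            ≤ 2 * ENNReal.ofReal M * ∫⁻ s in Ioo 0 (M * r0 / δs n), f₀ s :=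
              mul_le_mul_right (lintegral_mono_set (Ioo_subset_Ioo le_rfl hmT)) _
          _ ≤ F (δs n) x := hlow (δs n) h1
      have hsup2 : (⨆ m : ℕ, 2 * ENNReal.ofReal M * ∫⁻ s in Ioo 0 (m : ℝ), f₀ s)
          = 2 * ENNReal.ofReal M * ENNReal.ofReal (1 / 2) := by
        rw [← ENNReal.mul_iSup, hsup]
      have hfin : 2 * ENNReal.ofReal M * ENNReal.ofReal (1 / 2) = ENNReal.ofReal M := by
        have h2 : (2 : ℝ≥0∞) = ENNReal.ofReal 2 := by norm_num
        rw [mul_comm (2 : ℝ≥0∞) (ENNReal.ofReal M), mul_assoc, h2,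
          ← ENNReal.ofReal_mul (by norm_num)]
        norm_num
      calc ENNReal.ofReal (|g x| - ε)
          = 2 * ENNReal.ofReal M * ENNReal.ofReal (1 / 2) := by rw [hfin]
        _ = ⨆ m : ℕ, 2 * ENNReal.ofReal M * ∫⁻ s in Ioo 0 (m : ℝ), f₀ s := hsup2.symm
        _ ≤ liminf (fun n => F (δs n) x) atTop := iSup_le hm
    have hlim : Tendsto (fun m : ℕ => ENNReal.ofReal (|g x| - 1 / (m + 1))) atTop
        (𝓝 (ENNReal.ofReal |g x|)) := by
      apply (ENNReal.continuous_ofReal.tendsto _).comp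
      have h7 : Tendsto (fun m : ℕ => 1 / ((m : ℝ) + 1)) atTop (𝓝 0) :=
        tendsto_one_div_add_atTop_nhds_zero_nat
      simpa using tendsto_const_nhds.sub h7
    exact le_of_tendsto hlim (Eventually.of_forall fun m => main _ (by positivity))
  -- Fatou
  have hglobal : ENNReal.ofReal (∫ t in Ioo (0 : ℝ) 1, |g t|)
      = ∫⁻ t in Ioo (0 : ℝ) 1, ENNReal.ofReal |g t| :=
    ofReal_integral_eq_lintegral_ofReal hg.abs
      (by filter_upwards with t using abs_nonneg _)
  calc ENNReal.ofReal (∫ t in Ioo (0 : ℝ) 1, |g t|)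
      = ∫⁻ t in Ioo (0 : ℝ) 1, ENNReal.ofReal |g t| := hglobal
    _ ≤ ∫⁻ t in Ioo (0 : ℝ) 1, liminf (fun n => F (δs n) t) atTop := lintegral_mono_ae key
    _ ≤ liminf (fun n => ∫⁻ t in Ioo (0 : ℝ) 1, F (δs n) t) atTop :=
        lintegral_liminf_le fun n => hFmeas (δs n)
    _ ≤ liminf (fun n => Lam1 (δs n) φ (fun x => c + ∫ t in (0 : ℝ)..x, g t) (Set.Ioo 0 1))
          atTop := by
        exact liminf_le_liminf (by
          filter_upwards [hδpos] with n hn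
          rw [hLam (δs n) hn])
end

section
/- Fix α ∈ (0,1) and define u : ℝ → ℝ by u(x) = 0 for x ≤ 0 and u(x) = |log x|^{−α} for 0 < x < 1/2 (and arbitrarily, say 0, elsewhere); then u belongs to W^{1,1}(−1/2, 1/2). For every φ ∈ 𝒜 (with d = 1), Λ_δ(u, φ, (−1/2, 1/2)) → +∞ as δ → 0⁺. -/
open MeasureTheory Filter Set Topology
open scoped ENNReal NNReal

/-- The pathological function `u(x) = |log x|^{-α}` for `0 < x < 1/2`, `0` elsewhere. -/
noncomputable def upath (α : ℝ) : ℝ → ℝ := fun x =>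
  if 0 < x ∧ x < 1 / 2 then |Real.log x| ^ (-α) else 0

/-- The weak derivative of `upath`. -/
noncomputable def gpath (α : ℝ) : ℝ → ℝ := fun t =>
  if 0 < t ∧ t < 1 / 2 then α * (-Real.log t) ^ (-α - 1) / t else 0

lemma exp_neg_image (L : ℝ) :
    (fun s : ℝ => Real.exp (-s)) '' (Ioi L) = Ioo 0 (Real.exp (-L)) := by
  ext y
  constructor
  · rintro ⟨s, hs, rfl⟩
    exact ⟨Real.exp_pos _, Real.exp_lt_exp.2 (by simpa using hs)⟩
  · rintro ⟨hy0, hyL⟩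
    refine ⟨-Real.log y, ?_, by simp [Real.exp_log hy0]⟩
    have := Real.log_lt_log hy0 hyL
    rw [Real.log_exp] at this
    simpa using neg_lt_neg this

lemma exp_neg_deriv {L : ℝ} : ∀ s ∈ Ioi L,
    HasDerivWithinAt (fun s : ℝ => Real.exp (-s)) (-Real.exp (-s)) (Ioi L) s := by
  intro s _
  have h := (Real.hasDerivAt_exp (-s)).comp s (hasDerivAt_neg s)
  simpa [mul_neg_one, Function.comp_def] using h.hasDerivWithinAt

lemma exp_neg_injOn {L : ℝ} : InjOn (fun s : ℝ => Real.exp (-s)) (Ioi L) :=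
  fun _ _ _ _ h => neg_injective (Real.exp_injective h)

lemma subst_main {α : ℝ} (hα0 : 0 < α) {x : ℝ} (hx0 : 0 < x) (hx2 : x ≤ 1 / 2) :
    IntegrableOn (gpath α) (Ioo 0 x) ∧
      ∫ t in Ioo 0 x, gpath α t = (-Real.log x) ^ (-α) := by
  set L : ℝ := -Real.log x with hLdef
  have hlogx : Real.log x < 0 := Real.log_neg hx0 (by linarith)
  have hL : 0 < L := by simpa [hLdef] using neg_pos.2 hlogx
  have hL2 : Real.log 2 ≤ L := by
    have := Real.log_le_log hx0 hx2
    rw [show (1 : ℝ) / 2 = 2⁻¹ by norm_num, Real.log_inv] at this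
    linarith
  have h2 : (0 : ℝ) < Real.log 2 := Real.log_pos one_lt_two
  have himg : (fun s : ℝ => Real.exp (-s)) '' (Ioi L) = Ioo 0 x := by
    rw [exp_neg_image, hLdef, neg_neg, Real.exp_log hx0]
  have hEq : EqOn (fun s : ℝ => |(-Real.exp (-s))| • gpath α (Real.exp (-s)))
      (fun s : ℝ => α * s ^ (-α - 1)) (Ioi L) := by
    intro s hs
    have hs' : Real.log 2 < s := lt_of_le_of_lt hL2 hs
    have hcond : 0 < Real.exp (-s) ∧ Real.exp (-s) < 1 / 2 := by
      refine ⟨Real.exp_pos _, ?_⟩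
      have : Real.exp (-s) < Real.exp (-Real.log 2) := Real.exp_lt_exp.2 (by linarith)
      have h12 : Real.exp (-Real.log 2) = 1 / 2 := by
        rw [Real.exp_neg, Real.exp_log two_pos]; norm_num
      rwa [h12] at this
    simp only [gpath, hcond, if_true, abs_neg, abs_of_pos (Real.exp_pos (-s)),
      Real.log_exp, neg_neg, smul_eq_mul, and_self]
    field_simp
  have hinteq := integral_image_eq_integral_abs_deriv_smul measurableSet_Ioi
    (exp_neg_deriv (L := L)) exp_neg_injOn (gpath α)
  rw [himg] at hinteq
  have hint2 : IntegrableOn (fun s : ℝ => α * s ^ (-α - 1)) (Ioi L) :=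
    (integrableOn_Ioi_rpow_of_lt (by linarith) hL).const_mul α
  have hval : ∫ s in Ioi L, α * s ^ (-α - 1) = L ^ (-α) := by
    rw [integral_const_mul, integral_Ioi_rpow_of_lt (by linarith) hL]
    rw [show (-α - 1 + 1 : ℝ) = -α by ring]
    field_simp
  constructor
  · rw [← himg, integrableOn_image_iff_integrableOn_abs_deriv_smul measurableSet_Ioi
      (exp_neg_deriv (L := L)) exp_neg_injOn (gpath α)]
    exact hint2.congr_fun (fun s hs => (hEq hs).symm) measurableSet_Ioi
  · rw [hinteq, setIntegral_congr_fun measurableSet_Ioi hEq, hval]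

lemma gpath_zero {α t : ℝ} (ht : t ≤ 0) : gpath α t = 0 := by
  rw [gpath, if_neg]; rintro ⟨h1, _⟩; linarith

lemma part1 {α : ℝ} (hα0 : 0 < α) :
    IntegrableOn (gpath α) (Ioo (-(1 / 2)) (1 / 2)) ∧
      ∀ x ∈ Ioo (-(1 / 2) : ℝ) (1 / 2),
        upath α x = ∫ t in Ioc (-(1 / 2) : ℝ) x, gpath α t := by
  have hInt0 : IntegrableOn (gpath α) (Ioo 0 (1 / 2)) :=
    (subst_main hα0 one_half_pos le_rfl).1
  have hIntNeg : IntegrableOn (gpath α) (Ioc (-(1 / 2)) 0) :=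
    integrableOn_zero.congr_fun (fun t ht => (gpath_zero ht.2).symm) measurableSet_Ioc
  constructor
  · refine (hIntNeg.union hInt0).mono_set ?_
    intro t ht
    rcases le_or_gt t 0 with h | h
    · exact Or.inl ⟨ht.1, h⟩
    · exact Or.inr ⟨h, ht.2⟩
  · intro x hx
    rcases le_or_gt x 0 with h | h
    · have h1 : upath α x = 0 := by
        rw [upath, if_neg]; rintro ⟨h1, _⟩; linarith
      have h2 : EqOn (gpath α) (fun _ => (0 : ℝ)) (Ioc (-(1 / 2)) x) :=
        fun t ht => gpath_zero (ht.2.trans h)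
      rw [h1, setIntegral_congr_fun measurableSet_Ioc h2, integral_zero]
    · have hsplit : Ioc (-(1 / 2) : ℝ) 0 ∪ Ioc 0 x = Ioc (-(1 / 2)) x :=
        Set.Ioc_union_Ioc_eq_Ioc (by norm_num) h.le
      have hIx : IntegrableOn (gpath α) (Ioc 0 x) :=
        hInt0.mono_set (fun t ht => ⟨ht.1, lt_of_le_of_lt ht.2 hx.2⟩)
      have hdisj : Disjoint (Ioc (-(1 / 2) : ℝ) 0) (Ioc (0 : ℝ) x) :=
        Set.Ioc_disjoint_Ioc_of_le le_rfl
      rw [← hsplit, setIntegral_union hdisj measurableSet_Ioc hIntNeg hIx]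
      have hz : ∫ t in Ioc (-(1 / 2) : ℝ) 0, gpath α t = 0 := by
        rw [setIntegral_congr_fun measurableSet_Ioc
          (fun t (ht : t ∈ Ioc (-(1 / 2) : ℝ) 0) => gpath_zero ht.2), integral_zero]
      have hval := (subst_main hα0 h hx.2.le).2
      rw [hz, zero_add, integral_Ioc_eq_integral_Ioo, hval]
      have hlog : Real.log x < 0 := Real.log_neg h (hx.2.trans_le (by norm_num))
      rw [upath]
      rw [if_pos ⟨h, hx.2⟩, abs_of_neg hlog]

lemma memA1_exists_pos {φ : ℝ → ℝ} (hφ : MemA1 φ) : ∃ t₀, 0 < t₀ ∧ 0 < φ t₀ := by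
  by_contra h
  push_neg at h
  have hz : EqOn (fun t => φ t / t ^ 2) (fun _ => (0 : ℝ)) (Ioi 0) := by
    intro t ht
    have h1 : φ t = 0 := le_antisymm (h t ht) (hφ.nonneg t ht.out.le)
    simp [h1]
  have hzero : ∫ t in Ioi (0 : ℝ), φ t / t ^ 2 = 0 := by
    rw [setIntegral_congr_fun measurableSet_Ioi hz, integral_zero]
  have hn := hφ.normalized
  rw [hzero] at hn
  norm_num at hn

lemma key_lower {α : ℝ} (hα0 : 0 < α) {φ : ℝ → ℝ} (hφ : MemA1 φ) {t₀ : ℝ} (ht₀ : 0 < t₀)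
    (hc : 0 < φ t₀) {δ : ℝ} (hδ : 0 < δ) (N : ℕ)
    (hN : 2 ^ N * Real.exp (-(t₀ * δ) ^ (-α⁻¹)) ≤ 1 / 4) :
    ENNReal.ofReal δ * ((N : ℝ≥0∞) * ENNReal.ofReal (φ t₀ / 9)) ≤
      Lam1 δ φ (upath α) (Ioo (-(1 / 2)) (1 / 2)) := by
  set B : ℝ := (t₀ * δ) ^ (-α⁻¹) with hBdef
  have hBpos : 0 < B := Real.rpow_pos_of_pos (mul_pos ht₀ hδ) _
  set x₀ : ℝ := Real.exp (-B) with hx₀def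
  have hx₀ : 0 < x₀ := Real.exp_pos _
  set a : ℕ → ℝ := fun k => 2 ^ k * x₀ with hadef
  have ha : ∀ k, 0 < a k := fun k => by positivity
  have hamono : ∀ j k, j ≤ k → a j ≤ a k := fun j k hjk => by
    have : (2 : ℝ) ^ j ≤ 2 ^ k := pow_le_pow_right₀ one_le_two hjk
    exact mul_le_mul_of_nonneg_right this hx₀.le
  have haN : ∀ k, k ≤ N → a k ≤ 1 / 4 := fun k hk => (hamono k N hk).trans hN
  set R : ℕ → Set (ℝ × ℝ) := fun k => Ioo (a k) (a (k + 1)) ×ˢ Ioo (-(a k)) 0 with hRdef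
  have hmeas : ∀ k, MeasurableSet (R k) := fun k => measurableSet_Ioo.prod measurableSet_Ioo
  set f : ℝ × ℝ → ℝ≥0∞ := fun p =>
    ENNReal.ofReal (φ (|upath α p.1 - upath α p.2| / δ) / |p.1 - p.2| ^ 2) with hfdef
  -- pointwise bound on each rectangle
  have hpt : ∀ k, k + 1 ≤ N → ∀ p ∈ R k,
      ENNReal.ofReal (φ t₀ / (9 * a k ^ 2)) ≤ f p := by
    intro k hk ⟨x, y⟩ hp
    obtain ⟨⟨hx1, hx2⟩, hy1, hy2⟩ := hp
    have hxpos : 0 < x := (ha k).trans hx1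
    have hak1 : a (k + 1) ≤ 1 / 4 := haN _ hk
    have hx14 : x < 1 / 4 := hx2.trans_le hak1
    have hx12 : x < 1 / 2 := by linarith
    have hlogx : Real.log x < 0 := Real.log_neg hxpos (by linarith)
    have huy : upath α y = 0 := by
      rw [upath, if_neg]; rintro ⟨h1, _⟩; linarith
    have hux : upath α x = (-Real.log x) ^ (-α) := by
      rw [upath, if_pos ⟨hxpos, hx12⟩, abs_of_neg hlogx]
    have huxpos : 0 < upath α x := by
      rw [hux]; exact Real.rpow_pos_of_pos (by linarith) _
    -- u x ≥ t₀ δ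
    have hlogB : -Real.log x < B := by
      have hxx₀ : x₀ < x := by
        have h2k : (1 : ℝ) ≤ 2 ^ k := one_le_pow₀ one_le_two
        have : x₀ ≤ a k := le_mul_of_one_le_left hx₀.le h2k
        linarith
      have := Real.log_lt_log (Real.exp_pos _) hxx₀
      rw [Real.log_exp] at this
      linarith
    have hrp : t₀ * δ ≤ upath α x := by
      have h1 : B ^ (-α) ≤ (-Real.log x) ^ (-α) :=
        Real.rpow_le_rpow_of_nonpos (by linarith) hlogB.le (by linarith)
      have h2 : B ^ (-α) = t₀ * δ := by
        rw [hBdef, ← Real.rpow_mul (mul_pos ht₀ hδ).le]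
        rw [show -α⁻¹ * -α = α⁻¹ * α by ring, inv_mul_cancel₀ (ne_of_gt hα0), Real.rpow_one]
      rw [hux]; rw [h2] at h1; exact h1
    have harg : t₀ ≤ |upath α x - upath α y| / δ := by
      rw [huy, sub_zero, abs_of_pos huxpos]
      exact (le_div_iff₀ hδ).2 hrp
    have hargnn : 0 ≤ |upath α x - upath α y| / δ := by positivity
    have hφge : φ t₀ ≤ φ (|upath α x - upath α y| / δ) :=
      hφ.mono (mem_Ici.2 ht₀.le) (mem_Ici.2 hargnn) harg
    have hxy1 : 0 < x - y := by linarith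
    have hxy2 : x - y ≤ 3 * a k := by
      have h2a : a (k + 1) = 2 * a k := by simp only [hadef]; rw [pow_succ]; ring
      nlinarith
    have hsq : (x - y) ^ 2 ≤ 9 * a k ^ 2 := by nlinarith [ha k]
    apply ENNReal.ofReal_le_ofReal
    have habs : |x - y| ^ 2 = (x - y) ^ 2 := sq_abs _
    show φ t₀ / (9 * a k ^ 2) ≤ φ (|upath α x - upath α y| / δ) / |x - y| ^ 2
    rw [habs]
    exact div_le_div₀ (hφ.nonneg _ hargnn) hφge (by positivity) hsq
  -- volume of R k
  have hvol : ∀ k, ENNReal.ofReal (φ t₀ / (9 * a k ^ 2)) * volume (R k)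
      = ENNReal.ofReal (φ t₀ / 9) := by
    intro k
    have h1 : volume (R k) = ENNReal.ofReal (a k ^ 2) := by
      rw [hRdef]
      simp only [Measure.volume_eq_prod, Measure.prod_prod, Real.volume_Ioo]
      rw [← ENNReal.ofReal_mul (by linarith [ha k, hamono k (k+1) (Nat.le_succ k)])]
      congr 1
      have h2a : a (k + 1) = 2 * a k := by simp only [hadef]; rw [pow_succ]; ring
      rw [h2a]; ring
    rw [h1, ← ENNReal.ofReal_mul (by positivity)]
    congr 1
    rw [div_mul_eq_mul_div, mul_div_mul_right _ _ (pow_ne_zero 2 (ha k).ne')]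
  -- disjointness
  have hdisjaux : ∀ j k, j < k → Disjoint (R j) (R k) := by
    intro j k hjk
    rw [Set.disjoint_left]
    rintro ⟨x, y⟩ hp hq
    have h1 : x < a (j + 1) := hp.1.2
    have h2 : a k < x := hq.1.1
    have := hamono (j + 1) k hjk
    linarith
  have hdisj : Set.PairwiseDisjoint (↑(Finset.range N)) R := by
    intro j _ k _ hjk
    rcases hjk.lt_or_gt with h | h
    · exact hdisjaux j k h
    · exact (hdisjaux k j h).symm
  -- union inside Ω ×ˢ Ω
  have hUsub : (⋃ k ∈ Finset.range N, R k) ⊆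
      (Ioo (-(1 / 2) : ℝ) (1 / 2)) ×ˢ (Ioo (-(1 / 2) : ℝ) (1 / 2)) := by
    intro p hp
    simp only [Set.mem_iUnion, Finset.mem_range] at hp
    obtain ⟨k, hk, hpk⟩ := hp
    obtain ⟨⟨hx1, hx2⟩, hy1, hy2⟩ := hpk
    have hak1 : a (k + 1) ≤ 1 / 4 := haN _ hk
    have hak : 0 < a k := ha k
    have hak4 : a k ≤ 1 / 4 := haN _ (le_of_lt (Nat.lt_of_succ_le hk))
    exact ⟨⟨by linarith, by linarith⟩, ⟨by linarith, by linarith⟩⟩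
  -- main chain
  rw [Lam1]
  refine mul_le_mul_right ?_ _
  calc (N : ℝ≥0∞) * ENNReal.ofReal (φ t₀ / 9)
      = ∑ k ∈ Finset.range N, ENNReal.ofReal (φ t₀ / 9) := by
        rw [Finset.sum_const, Finset.card_range, nsmul_eq_mul]
    _ ≤ ∑ k ∈ Finset.range N, ∫⁻ p in R k, f p := by
        refine Finset.sum_le_sum fun k hk => ?_
        have hk' : k + 1 ≤ N := Finset.mem_range.1 hk
        calc ENNReal.ofReal (φ t₀ / 9)
            = ENNReal.ofReal (φ t₀ / (9 * a k ^ 2)) * volume (R k) := (hvol k).symm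
          _ = ∫⁻ _ in R k, ENNReal.ofReal (φ t₀ / (9 * a k ^ 2)) := by
              rw [setLIntegral_const]
          _ ≤ ∫⁻ p in R k, f p := by
              refine lintegral_mono_ae ?_
              filter_upwards [ae_restrict_mem (hmeas k)] with p hp
              exact hpt k hk' p hp
    _ = ∫⁻ p in ⋃ k ∈ Finset.range N, R k, f p := by
        rw [lintegral_biUnion_finset hdisj (fun k _ => hmeas k)]
    _ ≤ ∫⁻ p in (Ioo (-(1 / 2) : ℝ) (1 / 2)) ×ˢ (Ioo (-(1 / 2) : ℝ) (1 / 2)), f p :=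
        lintegral_mono_set hUsub

lemma rpow_neg_tendsto {e : ℝ} (he : e < 0) :
    Tendsto (fun δ : ℝ => δ ^ e) (𝓝[>] (0 : ℝ)) atTop := by
  have h := (tendsto_rpow_atTop (y := -e) (by linarith)).comp tendsto_inv_nhdsGT_zero
  refine h.congr' ?_
  filter_upwards [self_mem_nhdsWithin] with δ hδ
  have hδ' : (0 : ℝ) < δ := hδ
  show (δ⁻¹) ^ (-e) = δ ^ e
  rw [Real.inv_rpow hδ'.le, ← Real.rpow_neg hδ'.le, neg_neg]

lemma mul_tendsto_nhdsWithin {t₀ : ℝ} (ht₀ : 0 < t₀) :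
    Tendsto (fun δ : ℝ => t₀ * δ) (𝓝[>] (0 : ℝ)) (𝓝[>] (0 : ℝ)) := by
  apply tendsto_nhdsWithin_of_tendsto_nhds_of_eventually_within
  · have h : Tendsto (fun δ : ℝ => t₀ * δ) (𝓝 (0 : ℝ)) (𝓝 (t₀ * 0)) :=
      (continuous_const.mul continuous_id).tendsto 0
    rw [mul_zero] at h
    exact h.mono_left nhdsWithin_le_nhds
  · filter_upwards [self_mem_nhdsWithin] with δ hδ
    exact mul_pos ht₀ hδ

/-- Pathology 1, first part: `u = upath α ∈ W^{1,1}(-1/2, 1/2)` and, for every `φ ∈ 𝒜`,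
`Λ_δ(u, φ, (-1/2,1/2)) → +∞` as `δ → 0⁺`. -/
theorem stmt3 (α : ℝ) (hα : α ∈ Set.Ioo (0 : ℝ) 1) :
    (∃ g : ℝ → ℝ, IntegrableOn g (Set.Ioo (-(1 / 2)) (1 / 2)) ∧
        ∀ x ∈ Set.Ioo (-(1 / 2) : ℝ) (1 / 2),
          upath α x = ∫ t in Set.Ioc (-(1 / 2) : ℝ) x, g t) ∧
    ∀ φ : ℝ → ℝ, MemA1 φ →
      Tendsto (fun δ => Lam1 δ φ (upath α) (Set.Ioo (-(1 / 2)) (1 / 2)))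
        (𝓝[>] (0 : ℝ)) (𝓝 ⊤) := by
  obtain ⟨hα0, hα1⟩ := hα
  refine ⟨⟨gpath α, (part1 hα0).1, (part1 hα0).2⟩, ?_⟩
  intro φ hφ
  obtain ⟨t₀, ht₀, hc⟩ := memA1_exists_pos hφ
  refine ENNReal.tendsto_nhds_top fun n => ?_
  have hT1 : Tendsto (fun δ : ℝ => (t₀ * δ) ^ (-α⁻¹)) (𝓝[>] (0 : ℝ)) atTop :=
    (rpow_neg_tendsto (neg_lt_zero.2 (inv_pos.2 hα0))).comp (mul_tendsto_nhdsWithin ht₀)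
  have h1a : 1 < α⁻¹ := by
    have h := mul_inv_cancel₀ (ne_of_gt hα0)
    have hainv : 0 < α⁻¹ := inv_pos.2 hα0
    nlinarith
  have hT2 : Tendsto (fun δ : ℝ => δ * (t₀ * δ) ^ (-α⁻¹)) (𝓝[>] (0 : ℝ)) atTop := by
    have he : (1 : ℝ) - α⁻¹ < 0 := by linarith
    have hbase := (rpow_neg_tendsto he).const_mul_atTop (Real.rpow_pos_of_pos ht₀ (-α⁻¹))
    refine hbase.congr' ?_
    filter_upwards [self_mem_nhdsWithin] with δ hδ
    have hδ' : (0 : ℝ) < δ := hδ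
    show t₀ ^ (-α⁻¹) * δ ^ (1 - α⁻¹) = δ * (t₀ * δ) ^ (-α⁻¹)
    rw [Real.mul_rpow ht₀.le hδ'.le, show (1 : ℝ) - α⁻¹ = 1 + -α⁻¹ by ring,
      Real.rpow_add hδ', Real.rpow_one]
    ring
  set c : ℝ := φ t₀ with hcdef
  set r : ℝ := 9 * ((n : ℝ) + 1) / c with hrdef
  have hr : 0 ≤ r := by positivity
  filter_upwards [hT1.eventually_ge_atTop (2 * Real.log 4),
    hT2.eventually_ge_atTop (2 * r + 2),
    Ioo_mem_nhdsGT_of_mem (show (0 : ℝ) ∈ Ico (0 : ℝ) 1 from ⟨le_rfl, zero_lt_one⟩)]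
    with δ hB hδB hδmem
  obtain ⟨hδ, hδ1⟩ := hδmem
  set B : ℝ := (t₀ * δ) ^ (-α⁻¹) with hBdef
  have hBpos : 0 < B := Real.rpow_pos_of_pos (mul_pos ht₀ hδ) _
  set N : ℕ := ⌊B / 2⌋₊ with hNdef
  have hfl : (N : ℝ) ≤ B / 2 := Nat.floor_le (by positivity)
  have hfg : B / 2 - 1 < (N : ℝ) := Nat.sub_one_lt_floor _
  have hlog2a : Real.log 2 ≤ 1 := by
    have := Real.log_two_lt_d9; linarith
  have hlog2b : 0 < Real.log 2 := Real.log_pos one_lt_two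
  have hlog4 : 0 < Real.log 4 := Real.log_pos (by norm_num)
  have hlog4b : Real.log 4 ≤ B / 2 := by linarith
  have hNcond : 2 ^ N * Real.exp (-B) ≤ 1 / 4 := by
    have h1 : (N : ℝ) * Real.log 2 - B ≤ -Real.log 4 := by
      have hN0 : (0 : ℝ) ≤ (N : ℝ) := Nat.cast_nonneg N
      nlinarith
    have h2 : (2 : ℝ) ^ N = Real.exp ((N : ℝ) * Real.log 2) := by
      rw [Real.exp_nat_mul, Real.exp_log two_pos]
    rw [h2, ← Real.exp_add]
    calc Real.exp ((N : ℝ) * Real.log 2 + -B) ≤ Real.exp (-Real.log 4) :=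
          Real.exp_le_exp.2 (by linarith)
      _ = 1 / 4 := by rw [Real.exp_neg, Real.exp_log (by norm_num : (0:ℝ) < 4)]; norm_num
  have hkey := key_lower hα0 hφ ht₀ hc hδ N hNcond
  refine lt_of_lt_of_le ?_ hkey
  -- real inequality
  have hreal : (n : ℝ) < δ * ((N : ℝ) * (c / 9)) := by
    have h1 : r < δ * N := by nlinarith
    have h2 : r * (c / 9) = (n : ℝ) + 1 := by
      rw [hrdef]; field_simp
    nlinarith
  calc (n : ℝ≥0∞) = ENNReal.ofReal (n : ℝ) := (ENNReal.ofReal_natCast n).symm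
    _ < ENNReal.ofReal (δ * ((N : ℝ) * (c / 9))) :=
        (ENNReal.ofReal_lt_ofReal_iff (lt_of_le_of_lt (Nat.cast_nonneg n) hreal)).2 hreal
    _ = ENNReal.ofReal δ * ((N : ℝ≥0∞) * ENNReal.ofReal (c / 9)) := by
        rw [ENNReal.ofReal_mul hδ.le, ENNReal.ofReal_mul (Nat.cast_nonneg N),
          ENNReal.ofReal_natCast]
end

section
/- Fix α ∈ (0,1/2) and define u : ℝ → ℝ by u(x) = 0 for x ≤ 0 and u(x) = |log x|^{−α} for 0 < x < 1/2 (and arbitrarily, say 0, elsewhere); then u belongs to W^{1,1}(−1/2, 1/2). Let φ(t) = (1/4) min(t², 1) for t ≥ 0 (this φ belongs to 𝒜 for d = 1). Then Λ_δ(u, φ, (−1/2, 1/2)) = +∞ for every δ > 0. -/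
open MeasureTheory Filter Set Topology
open scoped ENNReal NNReal

namespace Stmt4Aux

noncomputable def F (α : ℝ) (x : ℝ) : ℝ := (-Real.log x) ^ (-α)

noncomputable def g0 (α : ℝ) (x : ℝ) : ℝ := α * (-Real.log x) ^ (-α - 1) / x

lemma neg_log_pos {x : ℝ} (h0 : 0 < x) (h1 : x < 1) : 0 < -Real.log x :=
  neg_pos.2 (Real.log_neg h0 h1)

lemma hasDerivAt_F {α x : ℝ} (h0 : 0 < x) (h1 : x < 1) :
    HasDerivAt (F α) (g0 α x) x := by
  have hl : 0 < -Real.log x := neg_log_pos h0 h1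
  have h1' : HasDerivAt (fun t : ℝ => -Real.log t) (-x⁻¹) x :=
    (Real.hasDerivAt_log h0.ne').neg
  have h2 : HasDerivAt (fun s : ℝ => s ^ (-α)) (-α * (-Real.log x) ^ (-α - 1)) (-Real.log x) :=
    Real.hasDerivAt_rpow_const (Or.inl hl.ne')
  have h3 := h2.comp x h1'
  simp only [Function.comp_def] at h3
  refine h3.congr_deriv (Eq.symm ?_)
  unfold g0
  field_simp

lemma continuousAt_g0 {α x : ℝ} (h0 : 0 < x) (h1 : x < 1) : ContinuousAt (g0 α) x := by
  have hl : 0 < -Real.log x := neg_log_pos h0 h1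
  have hlog : ContinuousAt (fun t : ℝ => -Real.log t) x := (Real.continuousAt_log h0.ne').neg
  have hr : ContinuousAt (fun t : ℝ => (-Real.log t) ^ (-α - 1)) x :=
    hlog.rpow_const (Or.inl hl.ne')
  exact (continuousAt_const.mul hr).div continuousAt_id h0.ne'

lemma continuousOn_g0 {α : ℝ} {s : Set ℝ} (hs : s ⊆ Ioo (0:ℝ) 1) : ContinuousOn (g0 α) s :=
  fun x hx => (continuousAt_g0 (hs hx).1 (hs hx).2).continuousWithinAt

lemma g0_nonneg {α x : ℝ} (hα : 0 ≤ α) (h0 : 0 < x) (h1 : x < 1) : 0 ≤ g0 α x := by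
  have hl : 0 ≤ -Real.log x := (neg_log_pos h0 h1).le
  exact div_nonneg (mul_nonneg hα (Real.rpow_nonneg hl _)) h0.le

lemma F_nonneg {α x : ℝ} (h0 : 0 < x) (h1 : x < 1) : 0 ≤ F α x :=
  Real.rpow_nonneg (neg_log_pos h0 h1).le _

/-- FTC on compact subintervals of `(0, 1)`. -/
lemma ftc_g0 {α a b : ℝ} (h0 : 0 < a) (hab : a ≤ b) (h1 : b < 1) :
    ∫ t in Set.Ioc a b, g0 α t = F α b - F α a := by
  have hsub : Set.Icc a b ⊆ Set.Ioo (0:ℝ) 1 := fun t ht =>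
    ⟨lt_of_lt_of_le h0 ht.1, lt_of_le_of_lt ht.2 h1⟩
  rw [← intervalIntegral.integral_of_le hab]
  refine intervalIntegral.integral_eq_sub_of_hasDerivAt (fun t ht => ?_) ?_
  · rw [uIcc_of_le hab] at ht
    exact hasDerivAt_F (hsub ht).1 (hsub ht).2
  · refine (continuousOn_g0 hsub).intervalIntegrable_of_Icc hab

lemma intOn_g0 {α : ℝ} (hα : 0 < α) : IntegrableOn (g0 α) (Set.Ioc 0 (1/2)) := by
  have h3 : ∀ i : ℕ, (0:ℝ) < (i:ℝ) + 3 := fun i => by positivity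
  have ha : Tendsto (fun i : ℕ => 1/((i:ℝ)+3)) atTop (𝓝 0) := by
    simp only [one_div]
    exact (tendsto_inv_atTop_zero).comp
      (tendsto_atTop_add_const_right atTop 3 tendsto_natCast_atTop_atTop)
  have hai : ∀ i : ℕ, (0:ℝ) < 1/((i:ℝ)+3) := fun i => by positivity
  have hai2 : ∀ i : ℕ, 1/((i:ℝ)+3) ≤ 1/2 := fun i => by
    rw [div_le_div_iff₀ (h3 i) (by norm_num)]
    have : (0:ℝ) ≤ (i:ℝ) := Nat.cast_nonneg i
    linarith
  have hsub : ∀ i : ℕ, Set.Icc (1/((i:ℝ)+3)) (1/2) ⊆ Set.Ioo (0:ℝ) 1 := fun i t ht =>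
    ⟨lt_of_lt_of_le (hai i) ht.1, lt_of_le_of_lt ht.2 (by norm_num)⟩
  refine integrableOn_Ioc_of_intervalIntegral_norm_bounded_left
    (I := F α (1/2)) (a := fun i : ℕ => 1/((i:ℝ)+3)) (fun i => ?_) ha ?_
  · exact ((continuousOn_g0 (hsub i)).integrableOn_Icc).mono_set Set.Ioc_subset_Icc_self
  · refine Filter.Eventually.of_forall fun i => ?_
    have heq : ∫ x in Set.Ioc (1/((i:ℝ)+3)) (1/2), ‖g0 α x‖ =
        ∫ x in Set.Ioc (1/((i:ℝ)+3)) (1/2), g0 α x := by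
      refine setIntegral_congr_fun measurableSet_Ioc fun x hx => ?_
      have hx' := (hsub i) (Set.Ioc_subset_Icc_self hx)
      exact Real.norm_of_nonneg (g0_nonneg hα.le hx'.1 hx'.2)
    rw [heq, ftc_g0 (hai i) (hai2 i) (by norm_num)]
    have := F_nonneg (α := α) (hai i) (lt_of_le_of_lt (hai2 i) (by norm_num : (1:ℝ)/2 < 1))
    linarith

lemma integral_g0 {α x : ℝ} (hα : 0 < α) (h0 : 0 < x) (h1 : x < 1/2) :
    ∫ t in Set.Ioc 0 x, g0 α t = F α x := by
  set s : ℕ → Set ℝ := fun i => Set.Ioc (x/((i:ℝ)+2)) x with hs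
  have hpos : ∀ i : ℕ, 0 < x/((i:ℝ)+2) := fun i => by positivity
  have hle : ∀ i : ℕ, x/((i:ℝ)+2) ≤ x := fun i =>
    div_le_self h0.le (by push_cast; linarith [Nat.cast_nonneg (α := ℝ) i])
  have hmono : Monotone s := by
    intro i j hij
    refine Set.Ioc_subset_Ioc_left (div_le_div_of_nonneg_left h0.le (by positivity) ?_)
    have : (i:ℝ) ≤ (j:ℝ) := by exact_mod_cast hij
    linarith
  have hunion : (⋃ i, s i) = Set.Ioc 0 x := by
    ext t
    simp only [hs, Set.mem_iUnion, Set.mem_Ioc]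
    constructor
    · rintro ⟨i, hti, htx⟩
      exact ⟨lt_trans (hpos i) hti, htx⟩
    · rintro ⟨ht0, htx⟩
      obtain ⟨n, hn⟩ := exists_nat_gt (x/t)
      refine ⟨n, ?_, htx⟩
      rw [div_lt_iff₀ (by positivity)]
      rw [div_lt_iff₀ ht0] at hn
      nlinarith [Nat.cast_nonneg (α := ℝ) n]
  have hint : IntegrableOn (g0 α) (Set.Ioc 0 x) :=
    (intOn_g0 hα).mono_set (Set.Ioc_subset_Ioc_right h1.le)
  have h2 := tendsto_setIntegral_of_monotone (fun i => measurableSet_Ioc) hmono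
    (hunion ▸ hint)
  rw [hunion] at h2
  have heval : ∀ i : ℕ, ∫ t in s i, g0 α t = F α x - F α (x/((i:ℝ)+2)) := fun i =>
    ftc_g0 (hpos i) (hle i) (lt_trans h1 (by norm_num))
  have hlog : Tendsto (fun i : ℕ => -Real.log (x/((i:ℝ)+2))) atTop atTop := by
    have hrw : ∀ i : ℕ, -Real.log (x/((i:ℝ)+2)) = Real.log ((i:ℝ)+2) + -Real.log x := by
      intro i
      rw [Real.log_div h0.ne' (by positivity)]
      ring
    rw [tendsto_congr hrw]
    exact tendsto_atTop_add_const_right _ _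
      (Real.tendsto_log_atTop.comp (tendsto_atTop_add_const_right atTop 2
        tendsto_natCast_atTop_atTop))
  have hF0 : Tendsto (fun i : ℕ => F α (x/((i:ℝ)+2))) atTop (𝓝 0) := by
    have := (tendsto_rpow_neg_atTop hα).comp hlog
    simpa [F, Function.comp_def] using this
  have hlim : Tendsto (fun i : ℕ => ∫ t in s i, g0 α t) atTop (𝓝 (F α x - 0)) := by
    rw [tendsto_congr heval]
    exact tendsto_const_nhds.sub hF0
  have := tendsto_nhds_unique h2 hlim
  simpa using this

/-- Part 1 of the theorem. -/
lemma part1 {α : ℝ} (hα0 : 0 < α) (hα2 : α < 1/2) :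
    ∃ g : ℝ → ℝ, IntegrableOn g (Set.Ioo (-(1/2)) (1/2)) ∧
      ∀ x ∈ Set.Ioo (-(1/2) : ℝ) (1/2),
        upath α x = ∫ t in Set.Ioc (-(1/2) : ℝ) x, g t := by
  classical
  set g : ℝ → ℝ := fun x => if 0 < x ∧ x < 1/2 then g0 α x else 0 with hg
  have hg_eq : Set.EqOn (g0 α) g (Set.Ioo 0 (1/2)) := by
    intro t ht
    simp only [hg]
    rw [if_pos ⟨ht.1, ht.2⟩]
  have hg_zero : ∀ t : ℝ, t ≤ 0 → g t = 0 := by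
    intro t ht
    simp only [hg]
    rw [if_neg (fun h : 0 < t ∧ t < 1/2 => absurd h.1 (not_lt.2 ht))]
  have hint_pos : IntegrableOn g (Set.Ioo 0 (1/2)) :=
    (((intOn_g0 hα0).mono_set Set.Ioo_subset_Ioc_self).congr_fun hg_eq measurableSet_Ioo)
  have hint_neg : IntegrableOn g (Set.Ioc (-(1/2)) 0) := by
    refine (integrableOn_zero).congr_fun (fun t ht => (hg_zero t ht.2).symm) measurableSet_Ioc
  have hint : IntegrableOn g (Set.Ioo (-(1/2)) (1/2)) := by
    refine (hint_neg.union hint_pos).mono_set ?_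
    intro t ht
    rcases le_or_gt t 0 with h | h
    · exact Or.inl ⟨ht.1, h⟩
    · exact Or.inr ⟨h, ht.2⟩
  refine ⟨g, hint, fun x hx => ?_⟩
  have hzero_int : ∀ b : ℝ, b ≤ 0 → ∫ t in Set.Ioc (-(1/2):ℝ) b, g t = 0 := by
    intro b hb
    rw [setIntegral_congr_fun measurableSet_Ioc (g := fun _ => (0:ℝ))
      (fun t ht => hg_zero t (le_trans ht.2 hb))]
    simp
  rcases le_or_gt x 0 with hx0 | hx0
  · rw [hzero_int x hx0]
    simp only [upath]
    rw [if_neg (fun h : 0 < x ∧ x < 1 / 2 => absurd h.1 (not_lt.2 hx0))]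
  · have hx2 : x < 1/2 := hx.2
    have hsplit : Set.Ioc (-(1/2):ℝ) x = Set.Ioc (-(1/2):ℝ) 0 ∪ Set.Ioc (0:ℝ) x :=
      (Set.Ioc_union_Ioc_eq_Ioc (by norm_num) hx0.le).symm
    have hi1 : IntegrableOn g (Set.Ioc (-(1/2):ℝ) 0) := hint_neg
    have hi2 : IntegrableOn g (Set.Ioc (0:ℝ) x) :=
      hint_pos.mono_set (fun t ht => ⟨ht.1, lt_of_le_of_lt ht.2 hx2⟩)
    rw [hsplit, setIntegral_union (by
      rw [Set.disjoint_left]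
      rintro t ⟨_, h1⟩ ⟨h2, _⟩
      exact absurd h1 (not_le.2 h2)) measurableSet_Ioc hi1 hi2]
    rw [hzero_int 0 le_rfl, zero_add]
    have hgg0 : ∫ t in Set.Ioc (0:ℝ) x, g t = ∫ t in Set.Ioc (0:ℝ) x, g0 α t := by
      refine setIntegral_congr_fun measurableSet_Ioc fun t ht => ?_
      exact (hg_eq ⟨ht.1, lt_of_le_of_lt ht.2 hx2⟩).symm
    rw [hgg0, integral_g0 hα0 hx0 hx2]
    have hlogx : Real.log x < 0 := Real.log_neg hx0 (lt_trans hx2 (by norm_num))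
    simp only [upath, F]
    rw [if_pos ⟨hx0, hx2⟩, abs_of_neg hlogx]

lemma measurable_w (α : ℝ) : Measurable fun y : ℝ => (-Real.log y) ^ (-α) := by
  measurability

/-- Part 2 of the theorem. -/
lemma part2 {α δ : ℝ} (hα0 : 0 < α) (hα2 : α < 1/2) (hδ : 0 < δ) :
    Lam1 δ (fun t => (1/4) * min (t ^ 2) 1) (upath α) (Set.Ioo (-(1/2)) (1/2)) = ⊤ := by
  simp only [Lam1]
  have h2α : 0 < 1 - 2*α := by linarith
  set c : ℝ := (1/4) * (1/δ)^2 with hc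
  have hcpos : 0 < c := by positivity
  set ε : ℝ := min (1/4) (Real.exp (-(1/δ) ^ (1/α))) with hε
  have hε0 : 0 < ε := lt_min (by norm_num) (Real.exp_pos _)
  have hε4 : ε ≤ 1/4 := min_le_left _ _
  -- key bound on `w y` for `y ∈ Ioo 0 ε`
  have hwfact : ∀ y ∈ Set.Ioo (0:ℝ) ε, 0 < -Real.log y ∧ (-Real.log y) ^ (-α) ≤ δ := by
    intro y hy
    have hy1 : y < 1 := lt_of_lt_of_le hy.2 (le_trans hε4 (by norm_num))
    have hl : 0 < -Real.log y := neg_log_pos hy.1 hy1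
    refine ⟨hl, ?_⟩
    have hM0 : 0 < (1/δ : ℝ) ^ (1/α) := Real.rpow_pos_of_pos (by positivity) _
    have hyM : y ≤ Real.exp (-((1/δ:ℝ) ^ (1/α))) := le_of_lt (lt_of_lt_of_le hy.2 (min_le_right _ _))
    have hlogy : Real.log y ≤ -((1/δ:ℝ) ^ (1/α)) := by
      calc Real.log y ≤ Real.log (Real.exp (-((1/δ:ℝ) ^ (1/α)))) := Real.log_le_log hy.1 hyM
        _ = -((1/δ:ℝ) ^ (1/α)) := Real.log_exp _
    have hMl : (1/δ:ℝ) ^ (1/α) ≤ -Real.log y := by linarith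
    have hMα : ((1/δ:ℝ) ^ (1/α)) ^ α = 1/δ := by
      rw [← Real.rpow_mul (by positivity : (0:ℝ) ≤ 1/δ), one_div_mul_cancel hα0.ne',
        Real.rpow_one]
    have hge : 1/δ ≤ (-Real.log y) ^ α := by
      rw [← hMα]
      exact Real.rpow_le_rpow hM0.le hMl hα0.le
    rw [Real.rpow_neg hl.le]
    calc ((-Real.log y) ^ α)⁻¹ ≤ ((1:ℝ)/δ)⁻¹ := inv_anti₀ (by positivity) hge
      _ = δ := by rw [one_div, inv_inv]
  -- the inner (in `x`) integral bound
  have hinner : ∀ y ∈ Set.Ioo (0:ℝ) ε,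
      ENNReal.ofReal (c * ((-Real.log y) ^ (-α))^2 / (2*y)) ≤
        ∫⁻ x in Set.Ioo (-(1/2):ℝ) 0,
          ENNReal.ofReal (c * ((-Real.log y) ^ (-α))^2 / (y - x)^2) := by
    intro y hy
    have hy0 : 0 < y := hy.1
    have hy4 : y ≤ 1/4 := le_of_lt (lt_of_lt_of_le hy.2 hε4)
    set K : ℝ := c * ((-Real.log y) ^ (-α))^2 with hK
    have hK0 : 0 ≤ K := by positivity
    have hcont : ContinuousOn (fun x : ℝ => K / (y - x)^2) (Set.Icc (-(1/2):ℝ) 0) := by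
      refine continuousOn_const.div (Continuous.continuousOn (by continuity)) ?_
      intro x hx
      have : 0 < y - x := by linarith [hx.2]
      positivity
    have hfi : IntegrableOn (fun x : ℝ => K / (y - x)^2) (Set.Ioo (-(1/2):ℝ) 0) :=
      hcont.integrableOn_Icc.mono_set Set.Ioo_subset_Icc_self
    have hnn : (0:ℝ→ℝ) ≤ᵐ[volume.restrict (Set.Ioo (-(1/2):ℝ) 0)] fun x => K / (y - x)^2 :=
      Filter.Eventually.of_forall (fun x => by positivity)
    rw [← ofReal_integral_eq_lintegral_ofReal hfi hnn]
    apply ENNReal.ofReal_le_ofReal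
    have hftc : ∫ x in Set.Ioo (-(1/2):ℝ) 0, K / (y - x)^2 = K * y⁻¹ - K * (y + 1/2)⁻¹ := by
      rw [← MeasureTheory.integral_Ioc_eq_integral_Ioo,
        ← intervalIntegral.integral_of_le (by norm_num : (-(1/2):ℝ) ≤ 0)]
      have hder : ∀ x ∈ Set.uIcc (-(1/2):ℝ) 0,
          HasDerivAt (fun x : ℝ => K * (y - x)⁻¹) (K / (y - x)^2) x := by
        intro x hx
        rw [Set.uIcc_of_le (by norm_num : (-(1/2):ℝ) ≤ 0)] at hx
        have hyx : 0 < y - x := by linarith [hx.2]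
        have h1 : HasDerivAt (fun x : ℝ => y - x) (-1) x := (hasDerivAt_id x).const_sub y
        have h3 := (h1.inv hyx.ne').const_mul K
        refine h3.congr_deriv (Eq.symm ?_)
        field_simp
      have hii : IntervalIntegrable (fun x : ℝ => K / (y - x)^2) volume (-(1/2):ℝ) 0 :=
        hcont.intervalIntegrable_of_Icc (by norm_num)
      rw [intervalIntegral.integral_eq_sub_of_hasDerivAt hder hii]
      rw [sub_zero, sub_neg_eq_add]
    rw [hftc]
    have h1 : K * (y + 1/2)⁻¹ ≤ K * (2*y)⁻¹ :=
      mul_le_mul_of_nonneg_left (inv_anti₀ (by linarith) (by linarith)) hK0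
    have hid : K * y⁻¹ - K * (2*y)⁻¹ = K * (2*y)⁻¹ := by
      field_simp
      ring
    have hdiv2 : K / (2*y) = K * (2*y)⁻¹ := div_eq_mul_inv _ _
    calc c * ((-Real.log y) ^ (-α))^2 / (2*y) = K * (2*y)⁻¹ := by rw [← hK, hdiv2]
      _ ≤ K * y⁻¹ - K * (y + 1/2)⁻¹ := by linarith
  -- divergence of the outer integral
  have hdiv : ∫⁻ y in Set.Ioo (0:ℝ) ε,
      ENNReal.ofReal (c * ((-Real.log y) ^ (-α))^2 / (2*y)) = ⊤ := by
    set K2 : ℝ := c / (2*(1-2*α)) with hK2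
    have hK2pos : 0 < K2 := by positivity
    have hHderiv : ∀ y ∈ Set.Ioo (0:ℝ) 1,
        HasDerivAt (fun t : ℝ => -K2 * (-Real.log t) ^ (1-2*α))
          (c * ((-Real.log y) ^ (-α))^2 / (2*y)) y := by
      intro y hy
      have hl : 0 < -Real.log y := neg_log_pos hy.1 hy.2
      have h1 : HasDerivAt (fun t : ℝ => -Real.log t) (-y⁻¹) y :=
        (Real.hasDerivAt_log hy.1.ne').neg
      have h2 : HasDerivAt (fun s : ℝ => s ^ (1-2*α))
          ((1-2*α) * (-Real.log y) ^ (1-2*α-1)) (-Real.log y) :=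
        Real.hasDerivAt_rpow_const (Or.inl hl.ne')
      have h3 := (h2.comp y h1).const_mul (-K2)
      simp only [Function.comp_def] at h3
      refine h3.congr_deriv (Eq.symm ?_)
      rw [show ((-Real.log y) ^ (-α))^2 = (-Real.log y) ^ (-α) * (-Real.log y) ^ (-α) from sq _,
        ← Real.rpow_add hl, show (1-2*α-1 : ℝ) = -α + -α by ring, hK2]
      have hyne : y ≠ 0 := hy.1.ne'
      have h2αne : (1-2*α) ≠ 0 := h2α.ne'
      field_simp
      have h2αne' : (1-α*2) ≠ 0 := by intro h; linarith
      field_simp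
    have hb0 : 0 < ε/2 := by positivity
    have hbε : ε/2 < ε := by linarith
    have hb1 : ε/2 < 1 := by linarith
    have hkey : ∀ a ∈ Set.Ioo (0:ℝ) (ε/2),
        ENNReal.ofReal ((-K2 * (-Real.log (ε/2)) ^ (1-2*α)) - (-K2 * (-Real.log a) ^ (1-2*α))) ≤
          ∫⁻ y in Set.Ioo (0:ℝ) ε, ENNReal.ofReal (c * ((-Real.log y) ^ (-α))^2 / (2*y)) := by
      intro a ha
      have hsub : Set.Ioc a (ε/2) ⊆ Set.Ioo (0:ℝ) ε := fun t ht =>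
        ⟨lt_trans ha.1 ht.1, lt_of_le_of_lt ht.2 hbε⟩
      refine le_trans ?_ (lintegral_mono_set hsub)
      have hsub1 : Set.Icc a (ε/2) ⊆ Set.Ioo (0:ℝ) 1 := fun t ht =>
        ⟨lt_of_lt_of_le ha.1 ht.1, lt_of_le_of_lt ht.2 hb1⟩
      have hcont : ContinuousOn (fun y : ℝ => c * ((-Real.log y) ^ (-α))^2 / (2*y))
          (Set.Icc a (ε/2)) := by
        intro t ht
        have h0 := (hsub1 ht).1
        have h1 := (hsub1 ht).2
        have hl : 0 < -Real.log t := neg_log_pos h0 h1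
        have : ContinuousAt (fun y : ℝ => c * ((-Real.log y) ^ (-α))^2 / (2*y)) t := by
          refine ContinuousAt.div ?_ (continuousAt_const.mul continuousAt_id) (by positivity)
          exact continuousAt_const.mul
            ((((Real.continuousAt_log h0.ne').neg).rpow_const (Or.inl hl.ne')).pow 2)
        exact this.continuousWithinAt
      have hfi2 : IntegrableOn (fun y : ℝ => c * ((-Real.log y) ^ (-α))^2 / (2*y))
          (Set.Ioc a (ε/2)) :=
        hcont.integrableOn_Icc.mono_set Set.Ioc_subset_Icc_self
      have hnn2 : (0:ℝ→ℝ) ≤ᵐ[volume.restrict (Set.Ioc a (ε/2))]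
          fun y => c * ((-Real.log y) ^ (-α))^2 / (2*y) := by
        refine (ae_restrict_iff' measurableSet_Ioc).2 (Filter.Eventually.of_forall fun y hy => ?_)
        have h0 : 0 < y := lt_trans ha.1 hy.1
        positivity
      rw [← ofReal_integral_eq_lintegral_ofReal hfi2 hnn2]
      refine ENNReal.ofReal_le_ofReal ?_
      rw [← intervalIntegral.integral_of_le ha.2.le]
      rw [intervalIntegral.integral_eq_sub_of_hasDerivAt (fun y hy => by
          rw [Set.uIcc_of_le ha.2.le] at hy
          exact hHderiv y (hsub1 hy))
        (hcont.intervalIntegrable_of_Icc ha.2.le)]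
    have htop : Tendsto (fun a : ℝ => (-K2 * (-Real.log (ε/2)) ^ (1-2*α)) -
        (-K2 * (-Real.log a) ^ (1-2*α))) (𝓝[>] (0:ℝ)) atTop := by
      have h1 : Tendsto (fun a : ℝ => -Real.log a) (𝓝[>] (0:ℝ)) atTop :=
        tendsto_neg_atBot_atTop.comp Real.tendsto_log_nhdsGT_zero
      have h2 : Tendsto (fun a : ℝ => (-Real.log a) ^ (1-2*α)) (𝓝[>] (0:ℝ)) atTop :=
        (tendsto_rpow_atTop h2α).comp h1
      have h3 : Tendsto (fun a : ℝ => K2 * (-Real.log a) ^ (1-2*α)) (𝓝[>] (0:ℝ)) atTop :=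
        h2.const_mul_atTop hK2pos
      have heq : (fun a : ℝ => (-K2 * (-Real.log (ε/2)) ^ (1-2*α)) -
          (-K2 * (-Real.log a) ^ (1-2*α))) =
          fun a : ℝ => K2 * (-Real.log a) ^ (1-2*α) + (-K2 * (-Real.log (ε/2)) ^ (1-2*α)) := by
        funext a
        ring
      rw [heq]
      exact tendsto_atTop_add_const_right _ _ h3
    refine ENNReal.eq_top_of_forall_nnreal_le fun r => ?_
    have hev2 : ∀ᶠ a in 𝓝[>] (0:ℝ), a ∈ Set.Ioo (0:ℝ) (ε/2) :=
      Filter.eventually_of_mem (Ioo_mem_nhdsGT hb0) (fun x hx => hx)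
    obtain ⟨a, hra, ha⟩ := ((htop.eventually_ge_atTop (r:ℝ)).and hev2).exists
    calc (r : ℝ≥0∞) = ENNReal.ofReal (r:ℝ) := (ENNReal.ofReal_coe_nnreal).symm
      _ ≤ ENNReal.ofReal ((-K2 * (-Real.log (ε/2)) ^ (1-2*α)) -
            (-K2 * (-Real.log a) ^ (1-2*α))) := ENNReal.ofReal_le_ofReal hra
      _ ≤ _ := hkey a ha
  -- Tonelli
  have hmeas : Measurable (fun p : ℝ × ℝ =>
      ENNReal.ofReal (c * ((-Real.log p.2) ^ (-α))^2 / (p.2 - p.1)^2)) := by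
    have m0 : Measurable fun y : ℝ => (-Real.log y) ^ (-α) := measurable_w α
    exact ENNReal.measurable_ofReal.comp
      ((measurable_const.mul ((m0.comp measurable_snd).pow_const 2)).div
        ((measurable_snd.sub measurable_fst).pow_const 2))
  have hiter : ∫⁻ p in (Set.Ioo (-(1/2):ℝ) 0) ×ˢ (Set.Ioo (0:ℝ) ε),
      ENNReal.ofReal (c * ((-Real.log p.2) ^ (-α))^2 / (p.2 - p.1)^2) =
      ∫⁻ y in Set.Ioo (0:ℝ) ε, ∫⁻ x in Set.Ioo (-(1/2):ℝ) 0,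
        ENNReal.ofReal (c * ((-Real.log y) ^ (-α))^2 / (y - x)^2) := by
    rw [Measure.volume_eq_prod, ← Measure.prod_restrict]
    exact lintegral_prod_symm _ hmeas.aemeasurable
  -- pointwise identification on the square
  have hpt : ∀ p : ℝ × ℝ, p ∈ (Set.Ioo (-(1/2):ℝ) 0) ×ˢ (Set.Ioo (0:ℝ) ε) →
      ENNReal.ofReal ((1/4) * min ((|upath α p.1 - upath α p.2| / δ) ^ 2) 1 /
        |p.1 - p.2| ^ 2) =
      ENNReal.ofReal (c * ((-Real.log p.2) ^ (-α))^2 / (p.2 - p.1)^2) := by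
    rintro ⟨x, y⟩ ⟨hx, hy⟩
    simp only
    have hy1 : y < 1/2 := lt_of_lt_of_le hy.2 (le_trans hε4 (by norm_num))
    have hux : upath α x = 0 := by
      simp only [upath]
      rw [if_neg (fun h : 0 < x ∧ x < 1/2 => absurd h.1 (not_lt.2 hx.2.le))]
    have hlogy : Real.log y < 0 := Real.log_neg hy.1 (by linarith)
    have huy : upath α y = (-Real.log y) ^ (-α) := by
      simp only [upath]
      rw [if_pos ⟨hy.1, hy1⟩, abs_of_neg hlogy]
    have hwpos : 0 < (-Real.log y) ^ (-α) := Real.rpow_pos_of_pos (by linarith) _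
    have hwδ : (-Real.log y) ^ (-α) ≤ δ := (hwfact y hy).2
    rw [hux, huy, zero_sub, abs_neg, abs_of_pos hwpos]
    have hmin : min (((-Real.log y) ^ (-α) / δ)^2) 1 = ((-Real.log y) ^ (-α) / δ)^2 := by
      refine min_eq_left ?_
      have h0 : 0 ≤ (-Real.log y) ^ (-α) / δ := by positivity
      have h1 : (-Real.log y) ^ (-α) / δ ≤ 1 := (div_le_one hδ).2 hwδ
      nlinarith
    rw [hmin]
    have habs : |x - y|^2 = (y - x)^2 := by rw [sq_abs]; ring
    rw [habs, hc]
    congr 1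
    ring
  -- assemble
  have hI : ∫⁻ p in (Set.Ioo (-(1/2):ℝ) (1/2)) ×ˢ (Set.Ioo (-(1/2):ℝ) (1/2)),
      ENNReal.ofReal ((1/4) * min ((|upath α p.1 - upath α p.2| / δ) ^ 2) 1 /
        |p.1 - p.2| ^ 2) = ⊤ := by
    rw [eq_top_iff]
    calc (⊤:ℝ≥0∞) = ∫⁻ y in Set.Ioo (0:ℝ) ε,
          ENNReal.ofReal (c * ((-Real.log y) ^ (-α))^2 / (2*y)) := hdiv.symm
      _ ≤ ∫⁻ y in Set.Ioo (0:ℝ) ε, ∫⁻ x in Set.Ioo (-(1/2):ℝ) 0,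
          ENNReal.ofReal (c * ((-Real.log y) ^ (-α))^2 / (y - x)^2) :=
        setLIntegral_mono' measurableSet_Ioo (fun y hy => hinner y hy)
      _ = ∫⁻ p in (Set.Ioo (-(1/2):ℝ) 0) ×ˢ (Set.Ioo (0:ℝ) ε),
          ENNReal.ofReal (c * ((-Real.log p.2) ^ (-α))^2 / (p.2 - p.1)^2) := hiter.symm
      _ = ∫⁻ p in (Set.Ioo (-(1/2):ℝ) 0) ×ˢ (Set.Ioo (0:ℝ) ε),
          ENNReal.ofReal ((1/4) * min ((|upath α p.1 - upath α p.2| / δ) ^ 2) 1 /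
            |p.1 - p.2| ^ 2) :=
        (setLIntegral_congr_fun (measurableSet_Ioo.prod measurableSet_Ioo)
          hpt).symm
      _ ≤ _ := lintegral_mono_set (Set.prod_mono
          (Set.Ioo_subset_Ioo le_rfl (by norm_num))
          (Set.Ioo_subset_Ioo (by norm_num) (by linarith)))
  rw [hI, ENNReal.mul_top (ENNReal.ofReal_pos.2 hδ).ne']

end Stmt4Aux

/-- Pathology 1, second part: for `α ∈ (0, 1/2)`, `u = upath α ∈ W^{1,1}(-1/2,1/2)` and,
with `φ(t) = (1/4) min(t², 1)`, `Λ_δ(u, φ, (-1/2,1/2)) = +∞` for every `δ > 0`. -/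
theorem stmt4 (α : ℝ) (hα : α ∈ Set.Ioo (0 : ℝ) (1 / 2)) :
    (∃ g : ℝ → ℝ, IntegrableOn g (Set.Ioo (-(1 / 2)) (1 / 2)) ∧
        ∀ x ∈ Set.Ioo (-(1 / 2) : ℝ) (1 / 2),
          upath α x = ∫ t in Set.Ioc (-(1 / 2) : ℝ) x, g t) ∧
    ∀ δ > (0 : ℝ),
      Lam1 δ (fun t => (1 / 4) * min (t ^ 2) 1) (upath α)
        (Set.Ioo (-(1 / 2)) (1 / 2)) = ⊤ := by
  exact ⟨Stmt4Aux.part1 hα.1 hα.2, fun δ hδ => Stmt4Aux.part2 hα.1 hα.2 hδ⟩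
end
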